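/- arXiv:1709.08251 — 2 statements merged into one kernel-verified Lean document; each statement's English description precedes it below -/
import Mathlib

section
/- Let Π be a p×p orthogonal projection, U = I − 2Π, and let Γ be a p×p diagonal matrix with all diagonal entries bounded in absolute value by M. Then for each j, |(UΓUᵀ)_{jj} − Γ_{jj}| ≤ 8M·Π_{jj}, and consequently (1/p) Σ_{j=1}^p |(UΓUᵀ)_{jj} − Γ_{jj}| ≤ 8M·rank(Π)/p. -/
open Matrix

/-!
Expanding `(1 - 2Π) Γ (1 - 2Π)ᵀ` with `Γ = diag d` gives
`(UΓUᵀ)_{jj} - d_j = 4 ∑_k Π_{jk}² d_k - 4 Π_{jj} d_j`. Since `Π` is symmetric and idempotent,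
`∑_k Π_{jk}² = (ΠΠᵀ)_{jj} = Π_{jj} ≥ 0`, so both terms are at most `4MΠ_{jj}` in norm.
Summing over `j` turns `∑_j Π_{jj}` into `tr Π`, which is `rank Π` for an idempotent matrix.
-/

namespace Matrix

variable {n : Type*} [Fintype n]

theorem mul_diagonal_mul_transpose_apply_self [DecidableEq n] {R : Type*} [CommSemiring R]
    (A : Matrix n n R) (d : n → R) (j : n) :
    (A * diagonal d * Aᵀ) j j = ∑ k, A j k ^ 2 * d k := by
  rw [mul_apply]
  simp only [mul_diagonal, transpose_apply]
  exact Finset.sum_congr rfl fun k _ => by ring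

theorem one_sub_two_smul_mul_diagonal_mul_transpose_apply_self_sub [DecidableEq n]
    {R : Type*} [CommRing R] (Q : Matrix n n R) (d : n → R) (j : n) :
    ((1 - 2 • Q) * diagonal d * (1 - 2 • Q)ᵀ : Matrix n n R) j j - d j
      = 4 * ∑ k, Q j k ^ 2 * d k - 4 * Q j j * d j := by
  have hsq : ∀ k, (1 - 2 • Q : Matrix n n R) j k ^ 2 * d k
      = (if j = k then d k * (1 - 4 * Q j k) else 0) + 4 * (Q j k ^ 2 * d k) := by
    intro k
    rw [sub_apply, smul_apply, one_apply]
    split_ifs <;> ring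
  rw [mul_diagonal_mul_transpose_apply_self, Finset.sum_congr rfl fun k _ => hsq k,
    Finset.sum_add_distrib, Finset.sum_ite_eq, ← Finset.mul_sum, if_pos (Finset.mem_univ j)]
  ring

theorem sum_row_sq_eq_diag {R : Type*} [CommSemiring R] {P : Matrix n n R} (hsymm : Pᵀ = P)
    (hidem : IsIdempotentElem P) (j : n) : ∑ k, P j k ^ 2 = P j j := by
  have h : (P * Pᵀ) j j = P j j := by rw [hsymm, hidem.eq]
  simpa [mul_apply, sq] using h

theorem norm_sum_row_sq_mul_le {P : Matrix n n ℝ} (hsymm : Pᵀ = P) (hidem : IsIdempotentElem P)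
    {d : n → ℂ} {M : ℝ} (hd : ∀ k, ‖d k‖ ≤ M) (j : n) :
    ‖∑ k, (P j k : ℂ) ^ 2 * d k‖ ≤ M * P j j :=
  calc ‖∑ k, (P j k : ℂ) ^ 2 * d k‖ ≤ ∑ k, P j k ^ 2 * M := by
        refine norm_sum_le_of_le _ fun k _ => ?_
        rw [norm_mul, norm_pow, Complex.norm_real, Real.norm_eq_abs, sq_abs]
        gcongr
        exact hd k
    _ = M * P j j := by rw [← Finset.sum_mul, sum_row_sq_eq_diag hsymm hidem, mul_comm]

theorem norm_one_sub_two_smul_mul_diagonal_mul_transpose_apply_self_sub_le [DecidableEq n]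
    {P : Matrix n n ℝ} (hsymm : Pᵀ = P) (hidem : IsIdempotentElem P)
    {d : n → ℂ} {M : ℝ} (hd : ∀ k, ‖d k‖ ≤ M) (j : n) :
    ‖((1 - 2 • P).map Complex.ofReal * diagonal d * ((1 - 2 • P).map Complex.ofReal)ᵀ) j j - d j‖
      ≤ 8 * M * P j j := by
  have hdiag : 0 ≤ P j j := sum_row_sq_eq_diag hsymm hidem j ▸ by positivity
  have hU : (1 - 2 • P).map Complex.ofReal = 1 - 2 • P.map Complex.ofReal :=
    (map_sub Complex.ofRealHom.mapMatrix 1 (2 • P)).trans (by rw [map_one, map_nsmul]; rfl)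
  rw [hU, one_sub_two_smul_mul_diagonal_mul_transpose_apply_self_sub]
  calc _ ≤ 4 * ‖∑ k, (P j k : ℂ) ^ 2 * d k‖ + 4 * (P j j * ‖d j‖) := by
        refine (norm_sub_le _ _).trans_eq ?_
        simp [abs_of_nonneg hdiag, mul_assoc]
    _ ≤ 4 * (M * P j j) + 4 * (P j j * M) := by
        gcongr
        exacts [norm_sum_row_sq_mul_le hsymm hidem hd j, hd j]
    _ = 8 * M * P j j := by ring

theorem rank_eq_trace_of_isIdempotentElem [DecidableEq n] {K : Type*} [Field K]
    {A : Matrix n n K} (hA : IsIdempotentElem A) : (A.rank : K) = A.trace := by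
  have hlin : IsIdempotentElem (toLin' A) := hA.map toLinAlgEquiv'
  rw [← trace_toLin'_eq, (LinearMap.IsIdempotentElem.isProj_range _ hlin).trace]
  rfl

end Matrix

/-- For an orthogonal projection `Π`, `U = I − 2Π`, and a diagonal matrix `Γ` with
entries bounded by `M`: `|(UΓUᵀ)_{jj} − Γ_{jj}| ≤ 8MΠ_{jj}` for each `j`, and the
average deviation is at most `8M·rank(Π)/p`. -/
theorem projection_perturbation_diagonal_bound
    (p : ℕ) (P : Matrix (Fin p) (Fin p) ℝ)
    (hsymm : Pᵀ = P) (hidem : P * P = P)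
    (M : ℝ) (d : Fin p → ℂ) (hd : ∀ j, ‖d j‖ ≤ M) :
    (∀ j : Fin p,
        ‖((((1 : Matrix (Fin p) (Fin p) ℝ) - 2 • P).map Complex.ofReal * diagonal d *
              (((1 : Matrix (Fin p) (Fin p) ℝ) - 2 • P).map Complex.ofReal)ᵀ) j j - d j)‖
          ≤ 8 * M * P j j)
      ∧ (1 / (p : ℝ)) * ∑ j : Fin p,
          ‖((((1 : Matrix (Fin p) (Fin p) ℝ) - 2 • P).map Complex.ofReal * diagonal d *
                (((1 : Matrix (Fin p) (Fin p) ℝ) - 2 • P).map Complex.ofReal)ᵀ) j j - d j)‖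
          ≤ 8 * M * (P.rank : ℝ) / p := by
  have hentry :=
    norm_one_sub_two_smul_mul_diagonal_mul_transpose_apply_self_sub_le hsymm hidem hd
  refine ⟨hentry, ?_⟩
  rw [one_div_mul_eq_div, rank_eq_trace_of_isIdempotentElem hidem, trace, Finset.mul_sum]
  gcongr with j
  exact hentry j
end

section
/- Let A ∈ ℝ^{p×p} be nonrandom, and V ∈ ℝ^p have independent entries with E V_j = 0, E V_j² = 1, E V_j^4 = κ, and E|V_j|^s ≤ c_s for 1 ≤ s ≤ 4. Then E(Vᵀ A V − tr A)² ≤ C κ ‖A‖_F² for an absolute constant C. -/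
open MeasureTheory ProbabilityTheory

namespace QFAux
variable {p : ℕ}

def expo (i j k l m : Fin p) : ℕ :=
  (if m = i then 1 else 0) + (if m = j then 1 else 0) + (if m = k then 1 else 0) +
    (if m = l then 1 else 0)

lemma prod_mu_zero {μ : Fin p → ℕ → ℝ} (h1 : ∀ m, μ m 1 = 0) {e : Fin p → ℕ} {m₀ : Fin p}
    (hm : e m₀ = 1) : ∏ m, μ m (e m) = 0 :=
  Finset.prod_eq_zero (Finset.mem_univ m₀) (by rw [hm]; exact h1 m₀)

lemma ind_nonneg (P : Prop) [Decidable P] : (0:ℝ) ≤ if P then 1 else 0 := by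
  split_ifs <;> norm_num

lemma prod_mu_bound {μ : Fin p → ℕ → ℝ} {κ : ℝ} (h0 : ∀ m, μ m 0 = 1) (h1 : ∀ m, μ m 1 = 0)
    (h2 : ∀ m, μ m 2 = 1) (h4 : ∀ m, μ m 4 = κ) (hκ : 1 ≤ κ) (i j k l : Fin p) :
    |(∏ m, μ m (expo i j k l m)) - (if i = j then (1:ℝ) else 0) * (if k = l then 1 else 0)|
      ≤ κ * ((if i = j then (1:ℝ) else 0) * ((if k = l then (1:ℝ) else 0) *
            (if i = k then (1:ℝ) else 0)) +
          (if i = k then (1:ℝ) else 0) * (if j = l then 1 else 0) +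
          (if i = l then (1:ℝ) else 0) * (if j = k then 1 else 0)) := by
  have hκ0 : (0:ℝ) ≤ κ := by linarith
  by_cases hij : i = j <;> by_cases hkl : k = l
  · -- i = j, k = l
    subst hij; subst hkl
    by_cases hik : i = k
    · subst hik
      have hP : ∏ m, μ m (expo i i i i m) = κ := by
        rw [Finset.prod_eq_single i]
        · simp [expo, h4]
        · intro b _ hb; simp [expo, hb, h0]
        · simp
      rw [hP]
      simp only [if_pos rfl, eq_self_iff_true, if_true]
      rw [abs_le]; constructor <;> nlinarith
    · have hki : k ≠ i := Ne.symm hik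
      have hP : ∏ m, μ m (expo i i k k m) = 1 := by
        apply Finset.prod_eq_one
        intro m _
        by_cases hmi : m = i
        · subst hmi; simp [expo, hik, h2]
        · by_cases hmk : m = k
          · subst hmk; simp [expo, hki, h2]
          · simp [expo, hmi, hmk, h0]
      rw [hP]
      simp [hik]
  · -- i = j, k ≠ l : P = 0
    subst hij
    have hP : ∏ m, μ m (expo i i k l m) = 0 := by
      by_cases hki : k = i
      · refine prod_mu_zero h1 (m₀ := l) ?_
        have hli : l ≠ i := fun h => hkl (hki.trans h.symm)
        simp [expo, hli, Ne.symm hkl]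
      · refine prod_mu_zero h1 (m₀ := k) ?_
        simp [expo, hki, hkl]
    rw [hP]
    simp only [if_neg hkl, mul_zero, zero_mul, sub_zero, abs_zero, if_pos rfl, one_mul]
    refine mul_nonneg hκ0 ?_
    split_ifs <;> norm_num
  · -- i ≠ j, k = l : P = 0
    subst hkl
    have hP : ∏ m, μ m (expo i j k k m) = 0 := by
      by_cases hki : k = i
      · refine prod_mu_zero h1 (m₀ := j) ?_
        have hjk : j ≠ k := fun h => hij ((h.trans hki).symm)
        simp [expo, Ne.symm hij, hjk]
      · have hik' : i ≠ k := fun h => hki h.symm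
        refine prod_mu_zero h1 (m₀ := i) ?_
        simp [expo, hij, hik']
    rw [hP]
    simp only [if_neg hij, zero_mul, sub_zero, abs_zero]
    refine mul_nonneg hκ0 ?_
    split_ifs <;> norm_num
  · -- i ≠ j, k ≠ l
    by_cases hikjl : i = k ∧ j = l
    · obtain ⟨hik', hjl⟩ := hikjl
      subst hik'; subst hjl
      have hji : j ≠ i := Ne.symm hij
      have hP : ∏ m, μ m (expo i j i j m) = 1 := by
        apply Finset.prod_eq_one
        intro m _
        by_cases hmi : m = i
        · subst hmi; simp [expo, hij, h2]
        · by_cases hmj : m = j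
          · subst hmj; simp [expo, hji, h2]
          · simp [expo, hmi, hmj, h0]
      rw [hP]
      simp [hij, hji]
      linarith
    · by_cases hiljk : i = l ∧ j = k
      · obtain ⟨hil', hjk⟩ := hiljk
        subst hil'; subst hjk
        have hji : j ≠ i := Ne.symm hij
        have hP : ∏ m, μ m (expo i j j i m) = 1 := by
          apply Finset.prod_eq_one
          intro m _
          by_cases hmi : m = i
          · subst hmi; simp [expo, hij, h2]
          · by_cases hmj : m = j
            · subst hmj; simp [expo, hji, h2]
            · simp [expo, hmi, hmj, h0]
        rw [hP]
        simp [hij, hji]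
        linarith
      · push_neg at hikjl hiljk
        have hP : ∏ m, μ m (expo i j k l m) = 0 := by
          by_cases hki : k = i
          · have hjl : j ≠ l := hikjl hki.symm
            refine prod_mu_zero h1 (m₀ := j) ?_
            have hjk : j ≠ k := fun h => hij (h.trans hki).symm
            simp [expo, Ne.symm hij, hjk, hjl]
          · by_cases hli : l = i
            · have hjk : j ≠ k := hiljk hli.symm
              refine prod_mu_zero h1 (m₀ := j) ?_
              have hjl : j ≠ l := fun h => hij (h.trans hli).symm
              simp [expo, Ne.symm hij, hjk, hjl]
            · have hik' : i ≠ k := fun h => hki h.symm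
              have hil' : i ≠ l := fun h => hli h.symm
              refine prod_mu_zero h1 (m₀ := i) ?_
              simp [expo, hij, hik', hil']
        rw [hP]
        simp only [if_neg hij, zero_mul, sub_zero, abs_zero]
        refine mul_nonneg hκ0 ?_
        split_ifs <;> norm_num

lemma expo_le (i j k l m : Fin p) : expo i j k l m ≤ 4 := by
  unfold expo; split_ifs <;> norm_num

lemma prod_expo_eq (x : Fin p → ℝ) (i j k l : Fin p) :
    ∏ m, x m ^ expo i j k l m = x i * x j * x k * x l := by
  simp only [expo, pow_add, Finset.prod_mul_distrib, pow_ite, pow_one, pow_zero,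
    Finset.prod_ite_eq', Finset.mem_univ, if_true]

variable {Ω : Type} [MeasureSpace Ω] [IsProbabilityMeasure (ℙ : Measure Ω)]

lemma pow_integrable {f : Ω → ℝ} (hf : MemLp f 4 ℙ) {n : ℕ} (hn : n ≤ 4) :
    Integrable (fun ω => f ω ^ n) ℙ := by
  have hb : Integrable (fun ω => 1 + ‖f ω‖ ^ ((4:ENNReal).toReal)) ℙ :=
    (integrable_const 1).add (hf.integrable_norm_rpow (by norm_num) (by norm_num))
  refine Integrable.mono' hb (hf.aestronglyMeasurable.pow n) ?_
  refine Filter.Eventually.of_forall fun ω => ?_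
  have h1 : ‖f ω ^ n‖ = ‖f ω‖ ^ n := by rw [norm_pow]
  have h2 : ‖f ω‖ ^ ((4:ENNReal).toReal) = ‖f ω‖ ^ (4:ℕ) := by
    rw [show ((4:ENNReal).toReal) = ((4:ℕ):ℝ) by norm_num, Real.rpow_natCast]
  rw [h1, h2]
  rcases le_or_gt (‖f ω‖) 1 with h | h
  · have : ‖f ω‖ ^ n ≤ 1 := pow_le_one₀ (norm_nonneg _) h
    nlinarith [pow_nonneg (norm_nonneg (f ω)) 4]
  · have : ‖f ω‖ ^ n ≤ ‖f ω‖ ^ 4 := pow_le_pow_right₀ h.le hn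
    linarith

lemma engine {p : ℕ} (X : Fin p → Ω → ℝ)
    (hX : iIndepFun X ℙ)
    (hm : ∀ i, Measurable (X i)) (hi : ∀ i, Integrable (X i) ℙ) (s : Finset (Fin p)) :
    Integrable (fun ω => ∏ m ∈ s, X m ω) ℙ ∧
      ∫ ω, ∏ m ∈ s, X m ω ∂ℙ = ∏ m ∈ s, ∫ ω, X m ω ∂ℙ := by
  classical
  induction s using Finset.cons_induction with
  | empty => simp
  | cons a s ha ih =>
    have hfun : (∏ j ∈ s, X j) = fun ω => ∏ j ∈ s, X j ω := by
      funext ω; simp [Finset.prod_apply]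
    have hind : IndepFun (∏ j ∈ s, X j) (X a) ℙ :=
      hX.indepFun_finsetProd_of_notMem hm ha
    have hint_prod : Integrable (∏ j ∈ s, X j) ℙ := by rw [hfun]; exact ih.1
    have hmul : Integrable ((∏ j ∈ s, X j) * X a) ℙ := hind.integrable_mul hint_prod (hi a)
    have hptw : ∀ ω, (∏ m ∈ Finset.cons a s ha, X m ω) = (∏ j ∈ s, X j) ω * X a ω := by
      intro ω; rw [Finset.prod_cons, hfun]; ring
    constructor
    · exact hmul.congr (Filter.Eventually.of_forall fun ω => (hptw ω).symm)
    · calc ∫ ω, ∏ m ∈ Finset.cons a s ha, X m ω ∂ℙ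
          = ∫ ω, (∏ j ∈ s, X j) ω * X a ω ∂ℙ :=
            integral_congr_ae (Filter.Eventually.of_forall fun ω => hptw ω)
        _ = (∫ ω, (∏ j ∈ s, X j) ω ∂ℙ) * ∫ ω, X a ω ∂ℙ :=
            hind.integral_mul_eq_mul_integral hint_prod.aestronglyMeasurable (hi a).aestronglyMeasurable
        _ = (∏ m ∈ s, ∫ ω, X m ω ∂ℙ) * ∫ ω, X a ω ∂ℙ := by rw [hfun, ih.2]
        _ = ∏ m ∈ Finset.cons a s ha, ∫ ω, X m ω ∂ℙ := by rw [Finset.prod_cons]; ring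


variable {Ω : Type} [MeasureSpace Ω] [IsProbabilityMeasure (ℙ : Measure Ω)]

theorem main_aux (p : ℕ) (A : Matrix (Fin p) (Fin p) ℝ) (V : Fin p → Ω → ℝ) (κ : ℝ)
    (hmV : ∀ j, Measurable (V j))
    (hind : iIndepFun V ℙ)
    (hL4 : ∀ j, MemLp (V j) 4 ℙ)
    (hm1 : ∀ j, ∫ ω, V j ω ∂ℙ = 0)
    (hm2 : ∀ j, ∫ ω, (V j ω) ^ 2 ∂ℙ = 1)
    (hm4 : ∀ j, ∫ ω, (V j ω) ^ 4 ∂ℙ = κ) :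
    ∫ ω, ((∑ i, ∑ j, V i ω * A i j * V j ω) - A.trace) ^ 2 ∂ℙ
      ≤ 3 * (κ * ∑ i, ∑ j, (A i j) ^ 2) := by
  classical
  -- moments
  set μm : Fin p → ℕ → ℝ := fun m n => ∫ ω, V m ω ^ n ∂ℙ with hμm
  have h0 : ∀ m, μm m 0 = 1 := by intro m; simp [hμm]
  have h1 : ∀ m, μm m 1 = 0 := by intro m; simpa [hμm] using hm1 m
  have h2 : ∀ m, μm m 2 = 1 := hm2
  have h4 : ∀ m, μm m 4 = κ := hm4
  rcases Nat.eq_zero_or_pos p with hp | hp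
  · subst hp
    simp only [Finset.univ_eq_empty, Finset.sum_empty]
    have htr0 : A.trace = 0 := by simp [Matrix.trace]
    rw [htr0]
    simp
  -- κ ≥ 1
  have hκ1 : 1 ≤ κ := by
    set j0 : Fin p := ⟨0, hp⟩
    have hi4 : Integrable (fun ω => V j0 ω ^ 4) ℙ := pow_integrable (hL4 j0) le_rfl
    have hi2 : Integrable (fun ω => V j0 ω ^ 2) ℙ := pow_integrable (hL4 j0) (by norm_num)
    have hnn : 0 ≤ ∫ ω, (V j0 ω ^ 2 - 1) ^ 2 ∂ℙ := integral_nonneg fun ω => sq_nonneg _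
    have hexp : ∫ ω, (V j0 ω ^ 2 - 1) ^ 2 ∂ℙ = κ - 1 := by
      have hptw : ∀ ω, (V j0 ω ^ 2 - 1) ^ 2 = V j0 ω ^ 4 - 2 * (V j0 ω ^ 2) + 1 :=
        fun ω => by ring
      calc ∫ ω, (V j0 ω ^ 2 - 1) ^ 2 ∂ℙ
          = ∫ ω, (V j0 ω ^ 4 - 2 * (V j0 ω ^ 2) + 1) ∂ℙ :=
            integral_congr_ae (Filter.Eventually.of_forall hptw)
        _ = κ - 1 := by
            have hi42 : Integrable (fun ω => V j0 ω ^ 4 - 2 * V j0 ω ^ 2) ℙ :=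
              hi4.sub (hi2.const_mul 2)
            have hi2' : Integrable (fun ω => 2 * V j0 ω ^ 2) ℙ := hi2.const_mul 2
            rw [integral_add hi42 (integrable_const 1), integral_sub hi4 hi2',
              integral_const_mul, hm4 j0, hm2 j0]
            simp
            ring
    linarith [hnn, hexp ▸ hnn]
  have hκ0 : (0:ℝ) ≤ κ := by linarith
  -- engine for moment products
  have heng : ∀ e : Fin p → ℕ, (∀ m, e m ≤ 4) →
      Integrable (fun ω => ∏ m, V m ω ^ e m) ℙ ∧
        ∫ ω, ∏ m, V m ω ^ e m ∂ℙ = ∏ m, μm m (e m) := by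
    intro e he
    have hc : iIndepFun (fun m ω => V m ω ^ e m) ℙ :=
      hind.comp (fun m x => x ^ e m) (fun m => measurable_id.pow_const (e m))
    exact engine _ hc (fun m => (hmV m).pow_const (e m))
      (fun m => pow_integrable (hL4 m) (he m)) Finset.univ
  have hMint : ∀ i j k l : Fin p, Integrable (fun ω => V i ω * V j ω * V k ω * V l ω) ℙ := by
    intro i j k l
    exact ((heng (expo i j k l) (expo_le i j k l)).1).congr
      (Filter.Eventually.of_forall fun ω => prod_expo_eq (fun m => V m ω) i j k l)
  have hM : ∀ i j k l : Fin p, ∫ ω, V i ω * V j ω * V k ω * V l ω ∂ℙ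
      = ∏ m, μm m (expo i j k l m) := by
    intro i j k l
    rw [← (heng _ (expo_le i j k l)).2]
    exact integral_congr_ae
      (Filter.Eventually.of_forall fun ω => (prod_expo_eq (fun m => V m ω) i j k l).symm)
  -- pair moments
  have hiV : ∀ i, Integrable (V i) ℙ := fun i => (hL4 i).integrable (by norm_num)
  have hpair_int : ∀ i j : Fin p, Integrable (fun ω => V i ω * V j ω) ℙ := by
    intro i j
    by_cases hij : i = j
    · subst hij
      exact (pow_integrable (hL4 i) (show 2 ≤ 4 by norm_num)).congr
        (Filter.Eventually.of_forall fun ω => by ring)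
    · exact ((hind.indepFun hij).integrable_mul (hiV i) (hiV j)).congr
        (Filter.Eventually.of_forall fun ω => rfl)
  have hpair : ∀ i j : Fin p, ∫ ω, V i ω * V j ω ∂ℙ = if i = j then 1 else 0 := by
    intro i j
    by_cases hij : i = j
    · subst hij
      rw [if_pos rfl, ← hm2 i]
      exact integral_congr_ae (Filter.Eventually.of_forall fun ω => by ring)
    · rw [if_neg hij]
      have := (hind.indepFun hij).integral_mul_eq_mul_integral (hiV i).aestronglyMeasurable (hiV j).aestronglyMeasurable
      calc ∫ ω, V i ω * V j ω ∂ℙ = (∫ ω, V i ω ∂ℙ) * ∫ ω, V j ω ∂ℙ := this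
        _ = 0 := by rw [hm1 i]; ring
  -- the quadratic form
  have hterm_int : ∀ i j : Fin p, Integrable (fun ω => V i ω * A i j * V j ω) ℙ := fun i j =>
    ((hpair_int i j).const_mul (A i j)).congr (Filter.Eventually.of_forall fun ω => by ring)
  have hQint : Integrable (fun ω => ∑ i, ∑ j, V i ω * A i j * V j ω) ℙ :=
    integrable_finset_sum _ fun i _ => integrable_finset_sum _ fun j _ => hterm_int i j
  have hQmean : ∫ ω, ∑ i, ∑ j, V i ω * A i j * V j ω ∂ℙ = ∑ i, A i i := by
    rw [integral_finset_sum _ fun i _ => integrable_finset_sum _ fun j _ => hterm_int i j]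
    refine Finset.sum_congr rfl fun i _ => ?_
    rw [integral_finset_sum _ fun j _ => hterm_int i j]
    have hterm : ∀ j, ∫ ω, V i ω * A i j * V j ω ∂ℙ = A i j * (if i = j then 1 else 0) := by
      intro j
      calc ∫ ω, V i ω * A i j * V j ω ∂ℙ = ∫ ω, A i j * (V i ω * V j ω) ∂ℙ :=
            integral_congr_ae (Filter.Eventually.of_forall fun ω => by ring)
        _ = A i j * ∫ ω, V i ω * V j ω ∂ℙ := integral_const_mul _ _
        _ = A i j * (if i = j then 1 else 0) := by rw [hpair]
    simp only [hterm, mul_ite, mul_one, mul_zero]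
    simp [Finset.sum_ite_eq]
  have hQsq : ∀ ω, (∑ i, ∑ j, V i ω * A i j * V j ω) ^ 2
      = ∑ i, ∑ k, ∑ j, ∑ l, A i j * A k l * (V i ω * V j ω * V k ω * V l ω) := by
    intro ω
    rw [sq, Finset.sum_mul_sum]
    refine Finset.sum_congr rfl fun i _ => Finset.sum_congr rfl fun k _ => ?_
    rw [Finset.sum_mul_sum]
    exact Finset.sum_congr rfl fun j _ => Finset.sum_congr rfl fun l _ => by ring
  have hRint : ∀ i k j l : Fin p,
      Integrable (fun ω => A i j * A k l * (V i ω * V j ω * V k ω * V l ω)) ℙ :=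
    fun i k j l => (hMint i j k l).const_mul _
  have hQsqint : Integrable (fun ω => (∑ i, ∑ j, V i ω * A i j * V j ω) ^ 2) ℙ := by
    refine (integrable_finset_sum _ fun i _ => integrable_finset_sum _ fun k _ =>
      integrable_finset_sum _ fun j _ => integrable_finset_sum _ fun l _ =>
        hRint i k j l).congr (Filter.Eventually.of_forall fun ω => (hQsq ω).symm)
  have hIQ2 : ∫ ω, (∑ i, ∑ j, V i ω * A i j * V j ω) ^ 2 ∂ℙ
      = ∑ i, ∑ k, ∑ j, ∑ l, A i j * A k l * (∏ m, μm m (expo i j k l m)) := by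
    calc ∫ ω, (∑ i, ∑ j, V i ω * A i j * V j ω) ^ 2 ∂ℙ
        = ∫ ω, ∑ i, ∑ k, ∑ j, ∑ l, A i j * A k l * (V i ω * V j ω * V k ω * V l ω) ∂ℙ :=
          integral_congr_ae (Filter.Eventually.of_forall hQsq)
      _ = _ := by
          rw [integral_finset_sum _ fun i _ => integrable_finset_sum _ fun k _ =>
            integrable_finset_sum _ fun j _ => integrable_finset_sum _ fun l _ => hRint i k j l]
          refine Finset.sum_congr rfl fun i _ => ?_
          rw [integral_finset_sum _ fun k _ => integrable_finset_sum _ fun j _ =>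
            integrable_finset_sum _ fun l _ => hRint i k j l]
          refine Finset.sum_congr rfl fun k _ => ?_
          rw [integral_finset_sum _ fun j _ => integrable_finset_sum _ fun l _ => hRint i k j l]
          refine Finset.sum_congr rfl fun j _ => ?_
          rw [integral_finset_sum _ fun l _ => hRint i k j l]
          refine Finset.sum_congr rfl fun l _ => ?_
          rw [integral_const_mul, hM]
  have htr : A.trace = ∑ i, A i i := by simp [Matrix.trace, Matrix.diag]
  -- variance expansion
  have hvar : ∫ ω, ((∑ i, ∑ j, V i ω * A i j * V j ω) - A.trace) ^ 2 ∂ℙ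
      = (∑ i, ∑ k, ∑ j, ∑ l, A i j * A k l * (∏ m, μm m (expo i j k l m)))
        - (∑ i, A i i) ^ 2 := by
    calc ∫ ω, ((∑ i, ∑ j, V i ω * A i j * V j ω) - A.trace) ^ 2 ∂ℙ
        = ∫ ω, ((∑ i, ∑ j, V i ω * A i j * V j ω) ^ 2
            - (2 * ∑ i, A i i) * (∑ i, ∑ j, V i ω * A i j * V j ω) + (∑ i, A i i) ^ 2) ∂ℙ :=
          integral_congr_ae (Filter.Eventually.of_forall fun ω => by rw [htr]; ring)
      _ = (∫ ω, (∑ i, ∑ j, V i ω * A i j * V j ω) ^ 2 ∂ℙ)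
            - (2 * ∑ i, A i i) * (∫ ω, ∑ i, ∑ j, V i ω * A i j * V j ω ∂ℙ)
            + (∑ i, A i i) ^ 2 := by
          have hQc : Integrable (fun ω => (∑ i, ∑ j, V i ω * A i j * V j ω) ^ 2
              - (2 * ∑ i, A i i) * (∑ i, ∑ j, V i ω * A i j * V j ω)) ℙ :=
            hQsqint.sub (hQint.const_mul _)
          have hQm : Integrable (fun ω =>
              (2 * ∑ i, A i i) * (∑ i, ∑ j, V i ω * A i j * V j ω)) ℙ :=
            hQint.const_mul _
          rw [integral_add hQc (integrable_const _), integral_sub hQsqint hQm,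
            integral_const_mul, integral_const]
          simp
      _ = _ := by rw [hIQ2, hQmean]; ring
  -- delta collapse for trace squared
  have hdelta : ∀ i k : Fin p,
      (∑ j, ∑ l, A i j * A k l * ((if i = j then (1:ℝ) else 0) * (if k = l then 1 else 0)))
        = A i i * A k k := by
    intro i k
    simp [mul_ite, ite_mul, mul_zero, zero_mul, mul_one, Finset.sum_ite_eq]
  have ht2 : (∑ i, A i i) ^ 2 = ∑ i, ∑ k, ∑ j, ∑ l,
      A i j * A k l * ((if i = j then (1:ℝ) else 0) * (if k = l then 1 else 0)) := by
    rw [sq, Finset.sum_mul_sum]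
    exact Finset.sum_congr rfl fun i _ => Finset.sum_congr rfl fun k _ => (hdelta i k).symm
  rw [hvar, ht2]
  rw [← Finset.sum_sub_distrib]
  simp only [← Finset.sum_sub_distrib, ← mul_sub]
  -- now bound the sum
  have step1 : ∑ i, ∑ k, ∑ j, ∑ l, A i j * A k l *
        ((∏ m, μm m (expo i j k l m)) - (if i = j then (1:ℝ) else 0) * (if k = l then 1 else 0))
      ≤ ∑ i, ∑ k, ∑ j, ∑ l, |A i j| * |A k l| *
        (κ * ((if i = j then (1:ℝ) else 0) * ((if k = l then (1:ℝ) else 0) *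
            (if i = k then (1:ℝ) else 0)) +
          (if i = k then (1:ℝ) else 0) * (if j = l then 1 else 0) +
          (if i = l then (1:ℝ) else 0) * (if j = k then 1 else 0))) := by
    refine Finset.sum_le_sum fun i _ => Finset.sum_le_sum fun k _ =>
      Finset.sum_le_sum fun j _ => Finset.sum_le_sum fun l _ => ?_
    calc A i j * A k l * ((∏ m, μm m (expo i j k l m))
            - (if i = j then (1:ℝ) else 0) * (if k = l then 1 else 0))
        ≤ |A i j * A k l * ((∏ m, μm m (expo i j k l m))
            - (if i = j then (1:ℝ) else 0) * (if k = l then 1 else 0))| := le_abs_self _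
      _ = |A i j| * |A k l| * |(∏ m, μm m (expo i j k l m))
            - (if i = j then (1:ℝ) else 0) * (if k = l then 1 else 0)| := by
          rw [abs_mul, abs_mul]
      _ ≤ _ := by
          refine mul_le_mul_of_nonneg_left ?_ (by positivity)
          exact prod_mu_bound h0 h1 h2 h4 hκ1 i j k l
  refine le_trans step1 ?_
  have hsplit : ∀ i k j l : Fin p, |A i j| * |A k l| *
        (κ * ((if i = j then (1:ℝ) else 0) * ((if k = l then (1:ℝ) else 0) *
            (if i = k then (1:ℝ) else 0)) +
          (if i = k then (1:ℝ) else 0) * (if j = l then 1 else 0) +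
          (if i = l then (1:ℝ) else 0) * (if j = k then 1 else 0)))
      = κ * (|A i j| * |A k l| * ((if i = j then (1:ℝ) else 0) * ((if k = l then (1:ℝ) else 0) *
            (if i = k then (1:ℝ) else 0))))
        + κ * (|A i j| * |A k l| * ((if i = k then (1:ℝ) else 0) * (if j = l then 1 else 0)))
        + κ * (|A i j| * |A k l| * ((if i = l then (1:ℝ) else 0) * (if j = k then 1 else 0))) :=
    fun i k j l => by ring
  simp only [hsplit, Finset.sum_add_distrib, ← Finset.mul_sum]
  have hU1 : ∑ i, ∑ k, ∑ j, ∑ l, |A i j| * |A k l| * ((if i = j then (1:ℝ) else 0) *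
      ((if k = l then (1:ℝ) else 0) * (if i = k then (1:ℝ) else 0))) = ∑ i, |A i i| * |A i i| := by
    simp [mul_ite, ite_mul, mul_zero, zero_mul, mul_one, Finset.sum_ite_eq, Finset.sum_ite_eq']
  have hU2 : ∑ i, ∑ k, ∑ j, ∑ l, |A i j| * |A k l| * ((if i = k then (1:ℝ) else 0) *
      (if j = l then (1:ℝ) else 0)) = ∑ i, ∑ j, |A i j| * |A i j| := by
    simp [mul_ite, ite_mul, mul_zero, zero_mul, mul_one, Finset.sum_ite_eq, Finset.sum_ite_eq']
  have hU3 : ∑ i, ∑ k, ∑ j, ∑ l, |A i j| * |A k l| * ((if i = l then (1:ℝ) else 0) *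
      (if j = k then (1:ℝ) else 0)) = ∑ i, ∑ j, |A i j| * |A j i| := by
    simp [mul_ite, ite_mul, mul_zero, zero_mul, mul_one, Finset.sum_ite_eq, Finset.sum_ite_eq']
  rw [hU1, hU2, hU3]
  have b1 : ∑ i, |A i i| * |A i i| ≤ ∑ i, ∑ j, A i j ^ 2 := by
    calc ∑ i, |A i i| * |A i i| = ∑ i, A i i ^ 2 := by
          refine Finset.sum_congr rfl fun i _ => ?_
          rw [abs_mul_abs_self, sq]
      _ ≤ ∑ i, ∑ j, A i j ^ 2 :=
          Finset.sum_le_sum fun i _ =>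
            Finset.single_le_sum (f := fun j => A i j ^ 2) (fun j _ => sq_nonneg _)
              (Finset.mem_univ i)
  have b2 : ∑ i, ∑ j, |A i j| * |A i j| = ∑ i, ∑ j, A i j ^ 2 := by
    refine Finset.sum_congr rfl fun i _ => Finset.sum_congr rfl fun j _ => ?_
    rw [abs_mul_abs_self, sq]
  have b3 : ∑ i, ∑ j, |A i j| * |A j i| ≤ ∑ i, ∑ j, A i j ^ 2 := by
    have hptw : ∀ i j : Fin p, |A i j| * |A j i| ≤ (A i j ^ 2 + A j i ^ 2) / 2 := by
      intro i j
      nlinarith [sq_nonneg (|A i j| - |A j i|), sq_abs (A i j), sq_abs (A j i),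
        abs_nonneg (A i j), abs_nonneg (A j i)]
    have hsc : ∑ i, ∑ j, (A j i : ℝ) ^ 2 = ∑ i, ∑ j, A i j ^ 2 := Finset.sum_comm
    calc ∑ i, ∑ j, |A i j| * |A j i| ≤ ∑ i, ∑ j, (A i j ^ 2 + A j i ^ 2) / 2 :=
          Finset.sum_le_sum fun i _ => Finset.sum_le_sum fun j _ => hptw i j
      _ = (∑ i, ∑ j, A i j ^ 2) / 2 + (∑ i, ∑ j, A j i ^ 2) / 2 := by
          simp [add_div, Finset.sum_add_distrib, ← Finset.sum_div]
      _ = ∑ i, ∑ j, A i j ^ 2 := by rw [hsc]; ring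
  have c1 := mul_le_mul_of_nonneg_left b1 hκ0
  have c2 : κ * (∑ i, ∑ j, |A i j| * |A i j|) = κ * ∑ i, ∑ j, A i j ^ 2 := by rw [b2]
  have c3 := mul_le_mul_of_nonneg_left b3 hκ0
  linarith


end QFAux


/-- Moment bound for quadratic forms (case `r = 2`): there is a universal constant `C`
such that `E(VᵀAV − tr A)² ≤ C κ ‖A‖_F²` for every nonrandom matrix `A` and every
random vector `V` with independent standardized entries having fourth moment `κ`. -/
theorem quadratic_form_moment_bound :
    ∃ C : ℝ, 0 < C ∧
      ∀ (Ω : Type) (_ : MeasureSpace Ω), IsProbabilityMeasure (ℙ : Measure Ω) →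
        ∀ (p : ℕ) (A : Matrix (Fin p) (Fin p) ℝ) (V : Fin p → Ω → ℝ) (κ : ℝ),
          (∀ j, Measurable (V j)) →
          iIndepFun V ℙ →
          (∀ j, MemLp (V j) 4 ℙ) →
          (∀ j, ∫ ω, V j ω ∂ℙ = 0) →
          (∀ j, ∫ ω, (V j ω) ^ 2 ∂ℙ = 1) →
          (∀ j, ∫ ω, (V j ω) ^ 4 ∂ℙ = κ) →
          ∫ ω, ((∑ i, ∑ j, V i ω * A i j * V j ω) - A.trace) ^ 2 ∂ℙ
            ≤ C * (κ * ∑ i, ∑ j, (A i j) ^ 2) := by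
  refine ⟨3, by norm_num, ?_⟩
  intro Ω mΩ hprob p A V κ h1 h2 h3 h4 h5 h6
  exact @QFAux.main_aux Ω mΩ hprob p A V κ h1 h2 h3 h4 h5 h6
end
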